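/- For every integer n ≥ 1, the polynomial identity Ŵ_{2n}(x) = Σ_{j=0}^{n} (2j)! V(n,j) x^j (1−x)^{n−j} holds in ℤ[x]. -/

import Mathlib

open Polynomial Finset

/-- The word `0 π(1) π(2) ⋯ π(n)` of `π ∈ S_n`, with values of `π` taken in `{1,…,n}`:
`lword π 0 = 0` and `lword π j = π(j)` for `1 ≤ j ≤ n` (junk value `0` outside the range). -/
def lword {n : ℕ} (π : Equiv.Perm (Fin n)) (j : ℕ) : ℕ :=
  if j = 0 then 0
  else if h : j - 1 < n then ((π ⟨j - 1, h⟩ : Fin n) : ℕ) + 1 else 0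

/-- The number of left peaks of `π ∈ S_n`: indices `i ∈ {1,…,n-1}` with
`π(i-1) < π(i) > π(i+1)`, where `π(0) = 0`. -/
def lpk (n : ℕ) (π : Equiv.Perm (Fin n)) : ℕ :=
  ((Finset.Icc 1 (n - 1)).filter (fun i =>
    lword π (i - 1) < lword π i ∧ lword π (i + 1) < lword π i)).card

/-- The left peak polynomial `Ŵ_n(x) = Σ_{π ∈ S_n} x^{lpk(π)}`. -/
noncomputable def Wpoly (n : ℕ) : Polynomial ℤ :=
  ∑ π : Equiv.Perm (Fin n), Polynomial.X ^ lpk n π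

/-- The central factorial numbers of odd indices `V(n,k)`, defined by the recurrence
`V(n,k) = V(n-1,k-1) + (2k+1)^2 * V(n-1,k)` with `V(0,0) = 1` and `V(0,k) = 0` for `k ≠ 0`. -/
def V : ℕ → ℕ → ℤ
  | 0, 0 => 1
  | 0, _ + 1 => 0
  | n + 1, 0 => V n 0
  | n + 1, k + 1 => V n k + (2 * ((k : ℤ) + 1) + 1) ^ 2 * V n (k + 1)

/-- peak set -/
def pk (n : ℕ) (π : Equiv.Perm (Fin n)) : Finset ℕ :=
  (Finset.Icc 1 (n - 1)).filter (fun i =>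
    lword π (i - 1) < lword π i ∧ lword π (i + 1) < lword π i)

lemma lpk_eq_card_pk (n : ℕ) (π : Equiv.Perm (Fin n)) : lpk n π = (pk n π).card := rfl

lemma lword_le {m : ℕ} (σ : Equiv.Perm (Fin m)) (i : ℕ) : lword σ i ≤ m := by
  unfold lword
  split_ifs with h1 h2
  · omega
  · have := (σ ⟨i - 1, h2⟩).isLt; omega
  · omega

lemma mem_pk {n : ℕ} (π : Equiv.Perm (Fin n)) (i : ℕ) :
    i ∈ pk n π ↔ (1 ≤ i ∧ i ≤ n - 1) ∧
      lword π (i - 1) < lword π i ∧ lword π (i + 1) < lword π i := by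
  simp [pk, Finset.mem_filter, Finset.mem_Icc]

lemma pk_not_adj {m : ℕ} (σ : Equiv.Perm (Fin m)) {i : ℕ} (h : i ∈ pk m σ) :
    i + 1 ∉ pk m σ := by
  rw [mem_pk] at h ⊢
  push_neg
  intro _ h2
  simp only [Nat.add_sub_cancel] at h2
  omega

/-- insert the max value `m` at position `p` -/
def ins {m : ℕ} (σ : Equiv.Perm (Fin m)) (p : Fin (m + 1)) : Equiv.Perm (Fin (m + 1)) :=
  (finSuccEquiv' p).trans ((Equiv.optionCongr σ).trans (finSuccEquiv' (Fin.last m)).symm)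

lemma ins_self {m : ℕ} (σ : Equiv.Perm (Fin m)) (p : Fin (m + 1)) :
    ins σ p p = Fin.last m := by
  simp [ins, finSuccEquiv'_at, finSuccEquiv'_symm_none]

lemma ins_succAbove {m : ℕ} (σ : Equiv.Perm (Fin m)) (p : Fin (m + 1)) (k : Fin m) :
    ins σ p (p.succAbove k) = Fin.castSucc (σ k) := by
  simp only [ins, Equiv.trans_apply, finSuccEquiv'_succAbove, Equiv.optionCongr_apply,
    Option.map_some, finSuccEquiv'_symm_some, Fin.succAbove_last]

lemma lword_ins {m : ℕ} (σ : Equiv.Perm (Fin m)) (p : Fin (m + 1)) (i : ℕ) :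
    lword (ins σ p) i =
      if i ≤ (p : ℕ) then lword σ i
      else if i = (p : ℕ) + 1 then m + 1
      else lword σ (i - 1) := by
  have hp : (p : ℕ) < m + 1 := p.isLt
  rcases i with _ | i'
  · simp [lword]
  · by_cases h : i' < m + 1
    · rcases lt_trichotomy i' (p : ℕ) with hlt | heq | hgt
      · -- i' < p
        have hkm : i' < m := by omega
        have hj : (⟨i', h⟩ : Fin (m + 1)) = p.succAbove ⟨i', hkm⟩ := by
          rw [Fin.succAbove_of_castSucc_lt]
          · rfl
          · exact hlt
        rw [if_pos (by omega : i' + 1 ≤ (p : ℕ))]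
        unfold lword
        simp only [Nat.add_sub_cancel]
        rw [if_neg (by omega), if_neg (by omega), dif_pos h, dif_pos hkm, hj, ins_succAbove]
        simp
      · -- i' = p
        have hj : (⟨i', h⟩ : Fin (m + 1)) = p := by
          apply Fin.ext; simpa using heq
        rw [if_neg (by omega), if_pos (by omega)]
        unfold lword
        simp only [Nat.add_sub_cancel]
        rw [if_neg (by omega), dif_pos h, hj, ins_self]
        simp
      · -- i' > p
        have hkm : i' - 1 < m := by omega
        have hj : (⟨i', h⟩ : Fin (m + 1)) = p.succAbove ⟨i' - 1, hkm⟩ := by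
          rw [Fin.succAbove_of_le_castSucc]
          · apply Fin.ext; simp [Fin.val_succ]; omega
          · rw [Fin.le_castSucc_iff]
            simp only [Fin.lt_def, Fin.val_succ]
            omega
        rw [if_neg (by omega), if_neg (by omega)]
        unfold lword
        simp only [Nat.add_sub_cancel]
        rw [if_neg (by omega), if_neg (by omega), dif_pos h, dif_pos hkm, hj, ins_succAbove]
        simp
    · -- out of range
      rw [if_neg (by omega), if_neg (by omega)]
      unfold lword
      simp only [Nat.add_sub_cancel]
      rw [if_neg (by omega), if_neg (by omega), dif_neg (by omega), dif_neg (by omega)]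

lemma mem_pk_ins {m : ℕ} (σ : Equiv.Perm (Fin m)) (p : Fin (m + 1)) (i : ℕ) :
    i ∈ pk (m + 1) (ins σ p) ↔
      (i ∈ pk m σ ∧ i < (p : ℕ)) ∨ ((i = (p : ℕ) + 1 ∧ (p : ℕ) < m)) ∨
        ((p : ℕ) + 3 ≤ i ∧ i - 1 ∈ pk m σ) := by
  have hp : (p : ℕ) < m + 1 := p.isLt
  have hb1 := lword_le σ (i - 1)
  have hb2 := lword_le σ i
  have hb3 := lword_le σ (i + 1)
  have hb4 := lword_le σ (i - 1 - 1)
  have hb5 := lword_le σ (i - 1 + 1)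
  simp only [mem_pk, lword_ins, Nat.add_sub_cancel]
  rcases Nat.eq_zero_or_pos i with h0 | h1
  · subst h0
    constructor
    · rintro ⟨⟨h, -⟩, -⟩; exact absurd h (by omega)
    · rintro (⟨⟨⟨h, -⟩, -⟩, -⟩ | ⟨h, -⟩ | ⟨h, -⟩) <;> exact absurd h (by omega)
  · have e1 : lword σ (i - 1 + 1) = lword σ i := by congr 1; omega
    rw [e1]; split_ifs <;> omega

lemma pk_mem_bounds {m : ℕ} (σ : Equiv.Perm (Fin m)) {j : ℕ} (h : j ∈ pk m σ) :
    1 ≤ j ∧ j ≤ m - 1 ∧ j < m ∧ 2 ≤ m := by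
  rw [mem_pk] at h
  omega

lemma pk_ins_eq {m : ℕ} (σ : Equiv.Perm (Fin m)) (p : Fin (m + 1)) :
    pk (m + 1) (ins σ p) =
      ((pk m σ).filter (· < (p : ℕ)) ∪
        ((pk m σ).filter (fun j => (p : ℕ) + 1 < j)).image (· + 1)) ∪
        (if (p : ℕ) < m then {(p : ℕ) + 1} else ∅) := by
  ext i
  rw [mem_pk_ins]
  simp only [Finset.mem_union, Finset.mem_filter, Finset.mem_image]
  constructor
  · rintro (⟨h1, h2⟩ | ⟨h1, h2⟩ | ⟨h1, h2⟩)
    · exact Or.inl (Or.inl ⟨h1, h2⟩)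
    · right; rw [if_pos h2]; simp [h1]
    · left; right
      exact ⟨i - 1, ⟨h2, by omega⟩, by omega⟩
  · rintro ((⟨h1, h2⟩ | ⟨j, ⟨hj1, hj2⟩, hj3⟩) | hmem)
    · exact Or.inl ⟨h1, h2⟩
    · right; right
      have := pk_mem_bounds σ hj1
      constructor
      · omega
      · have : i - 1 = j := by omega
        rwa [this]
    · right; left
      by_cases hc : (p : ℕ) < m
      · rw [if_pos hc] at hmem
        simp at hmem
        exact ⟨hmem, hc⟩
      · rw [if_neg hc] at hmem
        simp at hmem

lemma card_pk_ins {m : ℕ} (σ : Equiv.Perm (Fin m)) (p : Fin (m + 1)) :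
    (pk (m + 1) (ins σ p)).card =
      ((pk m σ).filter (· < (p : ℕ))).card +
        ((pk m σ).filter (fun j => (p : ℕ) + 1 < j)).card +
        (if (p : ℕ) < m then 1 else 0) := by
  rw [pk_ins_eq, Finset.card_union_of_disjoint, Finset.card_union_of_disjoint,
    Finset.card_image_of_injective _ (add_left_injective 1)]
  · split_ifs <;> simp
  · rw [Finset.disjoint_left]
    intro x hx hx'
    simp only [Finset.mem_filter, Finset.mem_image] at hx hx'
    obtain ⟨j, ⟨hj1, hj2⟩, hj3⟩ := hx'
    omega
  · rw [Finset.disjoint_left]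
    intro x hx hx'
    simp only [Finset.mem_union, Finset.mem_filter, Finset.mem_image] at hx
    by_cases hc : (p : ℕ) < m
    · rw [if_pos hc] at hx'
      simp only [Finset.mem_singleton] at hx'
      rcases hx with ⟨_, h⟩ | ⟨j, ⟨hj1, hj2⟩, hj3⟩ <;> omega
    · rw [if_neg hc] at hx'
      simp at hx'

lemma pk_card_split {m : ℕ} (σ : Equiv.Perm (Fin m)) (P : ℕ) :
    (pk m σ).card =
      ((pk m σ).filter (· < P)).card + ((pk m σ).filter (fun j => P + 1 < j)).card +
        (((pk m σ).filter (· = P)).card + ((pk m σ).filter (· = P + 1)).card) := by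
  have hsplit : pk m σ =
      ((pk m σ).filter (· < P) ∪ (pk m σ).filter (fun j => P + 1 < j)) ∪
        ((pk m σ).filter (· = P) ∪ (pk m σ).filter (· = P + 1)) := by
    ext j
    by_cases hj : j ∈ pk m σ <;> simp [Finset.mem_filter, hj]
    omega
  have d1 : Disjoint ((pk m σ).filter (· < P)) ((pk m σ).filter (fun j => P + 1 < j)) := by
    rw [Finset.disjoint_left]; intro x hx hx'
    simp only [Finset.mem_filter] at hx hx'; omega
  have d2 : Disjoint ((pk m σ).filter (· = P)) ((pk m σ).filter (· = P + 1)) := by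
    rw [Finset.disjoint_left]; intro x hx hx'
    simp only [Finset.mem_filter] at hx hx'; omega
  have d3 : Disjoint ((pk m σ).filter (· < P) ∪ (pk m σ).filter (fun j => P + 1 < j))
      ((pk m σ).filter (· = P) ∪ (pk m σ).filter (· = P + 1)) := by
    rw [Finset.disjoint_left]; intro x hx hx'
    simp only [Finset.mem_union, Finset.mem_filter] at hx hx'
    rcases hx with h | h <;> rcases hx' with h' | h' <;> omega
  conv_lhs => rw [hsplit]
  rw [Finset.card_union_of_disjoint d3, Finset.card_union_of_disjoint d1,
    Finset.card_union_of_disjoint d2]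

lemma card_filter_eq {m : ℕ} (σ : Equiv.Perm (Fin m)) (a : ℕ) :
    ((pk m σ).filter (· = a)).card = if a ∈ pk m σ then 1 else 0 := by
  split_ifs with h
  · rw [Finset.filter_eq']
    simp [h]
  · rw [Finset.filter_eq']
    simp [h]

lemma lpk_ins {m : ℕ} (σ : Equiv.Perm (Fin m)) (p : Fin (m + 1)) :
    lpk (m + 1) (ins σ p) =
      if ((p : ℕ) = m ∨ (p : ℕ) ∈ pk m σ ∨ (p : ℕ) + 1 ∈ pk m σ) then lpk m σ
      else lpk m σ + 1 := by
  have hp : (p : ℕ) < m + 1 := p.isLt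
  have hsplit := pk_card_split σ (p : ℕ)
  rw [card_filter_eq, card_filter_eq] at hsplit
  rw [lpk_eq_card_pk, lpk_eq_card_pk, card_pk_ins, hsplit]
  by_cases h1 : (p : ℕ) = m
  · have h2 : (p : ℕ) ∉ pk m σ := fun h => by have := pk_mem_bounds σ h; omega
    have h3 : (p : ℕ) + 1 ∉ pk m σ := fun h => by have := pk_mem_bounds σ h; omega
    rw [if_pos (Or.inl h1), if_neg h2, if_neg h3, if_neg (by omega)]
  · have hlt : (p : ℕ) < m := by omega
    rw [if_pos hlt]
    by_cases h2 : (p : ℕ) ∈ pk m σ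
    · have h3 : (p : ℕ) + 1 ∉ pk m σ := pk_not_adj σ h2
      rw [if_pos (Or.inr (Or.inl h2)), if_pos h2, if_neg h3]
    · by_cases h3 : (p : ℕ) + 1 ∈ pk m σ
      · rw [if_pos (Or.inr (Or.inr h3)), if_neg h2, if_pos h3]
      · rw [if_neg (by tauto), if_neg h2, if_neg h3]

def goodset {m : ℕ} (σ : Equiv.Perm (Fin m)) : Finset (Fin (m + 1)) :=
  Finset.univ.filter (fun p =>
    ((p : ℕ) = m ∨ (p : ℕ) ∈ pk m σ ∨ (p : ℕ) + 1 ∈ pk m σ))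

lemma card_goodset {m : ℕ} (σ : Equiv.Perm (Fin m)) :
    (goodset σ).card = 2 * lpk m σ + 1 := by
  classical
  have hcard : (goodset σ).card =
      (insert m ((pk m σ) ∪ (pk m σ).image (fun j => j - 1))).card := by
    refine Finset.card_bij (fun p _ => (p : ℕ)) ?_ ?_ ?_
    · intro p hp
      simp only [goodset, Finset.mem_filter, Finset.mem_univ, true_and] at hp
      simp only [Finset.mem_insert, Finset.mem_union, Finset.mem_image]
      rcases hp with h | h | h
      · exact Or.inl h
      · exact Or.inr (Or.inl h)
      · exact Or.inr (Or.inr ⟨(p : ℕ) + 1, h, by omega⟩)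
    · intro p _ q _ h
      exact Fin.ext h
    · intro b hb
      simp only [Finset.mem_insert, Finset.mem_union, Finset.mem_image] at hb
      have hbm : b ≤ m := by
        rcases hb with h | h | ⟨j, hj, hj2⟩
        · omega
        · have := pk_mem_bounds σ h; omega
        · have := pk_mem_bounds σ hj; omega
      refine ⟨⟨b, by omega⟩, ?_, rfl⟩
      simp only [goodset, Finset.mem_filter, Finset.mem_univ, true_and]
      rcases hb with h | h | ⟨j, hj, hj2⟩
      · exact Or.inl h
      · exact Or.inr (Or.inl h)
      · have := pk_mem_bounds σ hj
        have : b + 1 = j := by omega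
        exact Or.inr (Or.inr (by rw [this]; exact hj))
  rw [hcard, Finset.card_insert_of_notMem, Finset.card_union_of_disjoint,
    Finset.card_image_of_injOn, lpk_eq_card_pk]
  · ring
  · intro a ha b hb hab
    have hab' : a - 1 = b - 1 := hab
    have h1 := pk_mem_bounds σ ha
    have h2 := pk_mem_bounds σ hb
    omega
  · rw [Finset.disjoint_left]
    intro x hx hx'
    simp only [Finset.mem_image] at hx'
    obtain ⟨j, hj, hj2⟩ := hx'
    have h1 := pk_mem_bounds σ hx
    have h2 := pk_mem_bounds σ hj
    have : x + 1 = j := by omega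
    exact pk_not_adj σ hx (this ▸ hj)
  · simp only [Finset.mem_union, Finset.mem_image]
    rintro (h | ⟨j, hj, hj2⟩)
    · have := pk_mem_bounds σ h; omega
    · have := pk_mem_bounds σ hj; omega

lemma two_lpk_le {m : ℕ} (σ : Equiv.Perm (Fin m)) : 2 * lpk m σ ≤ m := by
  have h := card_goodset σ
  have h2 : (goodset σ).card ≤ m + 1 := by
    calc (goodset σ).card ≤ (Finset.univ : Finset (Fin (m+1))).card := Finset.card_le_card (Finset.filter_subset _ _)
    _ = m + 1 := by simp
  omega

lemma sum_X_lpk_ins {m : ℕ} (σ : Equiv.Perm (Fin m)) :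
    ∑ p : Fin (m + 1), (Polynomial.X : Polynomial ℤ) ^ lpk (m + 1) (ins σ p) =
      (2 * lpk m σ + 1) • (Polynomial.X : Polynomial ℤ) ^ lpk m σ +
        (m - 2 * lpk m σ) • (Polynomial.X : Polynomial ℤ) ^ (lpk m σ + 1) := by
  classical
  rw [← Finset.sum_filter_add_sum_filter_not Finset.univ
    (fun p : Fin (m+1) => ((p : ℕ) = m ∨ (p : ℕ) ∈ pk m σ ∨ (p : ℕ) + 1 ∈ pk m σ))]
  have h1 : ∀ p ∈ Finset.univ.filter (fun p : Fin (m+1) =>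
      ((p : ℕ) = m ∨ (p : ℕ) ∈ pk m σ ∨ (p : ℕ) + 1 ∈ pk m σ)),
      (Polynomial.X : Polynomial ℤ) ^ lpk (m + 1) (ins σ p) =
      (Polynomial.X : Polynomial ℤ) ^ lpk m σ := by
    intro p hp
    simp only [Finset.mem_filter, Finset.mem_univ, true_and] at hp
    rw [lpk_ins, if_pos hp]
  have h2 : ∀ p ∈ Finset.univ.filter (fun p : Fin (m+1) =>
      ¬((p : ℕ) = m ∨ (p : ℕ) ∈ pk m σ ∨ (p : ℕ) + 1 ∈ pk m σ)),
      (Polynomial.X : Polynomial ℤ) ^ lpk (m + 1) (ins σ p) =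
      (Polynomial.X : Polynomial ℤ) ^ (lpk m σ + 1) := by
    intro p hp
    simp only [Finset.mem_filter, Finset.mem_univ, true_and] at hp
    rw [lpk_ins, if_neg hp]
  rw [Finset.sum_congr rfl h1, Finset.sum_congr rfl h2, Finset.sum_const, Finset.sum_const]
  have hc1 : (Finset.univ.filter (fun p : Fin (m+1) =>
      ((p : ℕ) = m ∨ (p : ℕ) ∈ pk m σ ∨ (p : ℕ) + 1 ∈ pk m σ))).card = 2 * lpk m σ + 1 :=
    card_goodset σ
  have hc2 : (Finset.univ.filter (fun p : Fin (m+1) =>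
      ¬((p : ℕ) = m ∨ (p : ℕ) ∈ pk m σ ∨ (p : ℕ) + 1 ∈ pk m σ))).card = m - 2 * lpk m σ := by
    have := Finset.card_filter_add_card_filter_not (s := (Finset.univ : Finset (Fin (m+1))))
      (p := fun p : Fin (m+1) => ((p : ℕ) = m ∨ (p : ℕ) ∈ pk m σ ∨ (p : ℕ) + 1 ∈ pk m σ))
    have hu : (Finset.univ : Finset (Fin (m+1))).card = m + 1 := by simp
    have hle := two_lpk_le σ
    omega
  rw [hc1, hc2]

lemma ins_bijective (m : ℕ) :
    Function.Bijective (fun x : Equiv.Perm (Fin m) × Fin (m + 1) => ins x.1 x.2) := by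
  rw [Fintype.bijective_iff_injective_and_card]
  constructor
  · rintro ⟨σ, p⟩ ⟨τ, q⟩ h
    simp only at h
    have hpq : p = q := by
      by_contra hne
      obtain ⟨k, hk⟩ := Fin.exists_succAbove_eq hne
      have h1 : ins τ q p = Fin.last m := by rw [← h]; exact ins_self σ p
      have h2 : ins τ q p = Fin.castSucc (τ k) := by rw [← hk]; exact ins_succAbove τ q k
      have := h1 ▸ h2
      exact absurd this.symm (Fin.ne_last_of_lt (Fin.castSucc_lt_last (τ k)))
    subst hpq
    have hστ : σ = τ := by
      apply Equiv.ext
      intro k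
      have h1 := ins_succAbove σ p k
      have h2 := ins_succAbove τ p k
      rw [h, h2] at h1
      exact Fin.castSucc_injective m h1.symm
    rw [hστ]
  · simp [Fintype.card_perm, Nat.factorial_succ]
    ring

lemma nsmul_X_identity (m k : ℕ) (hk : 2 * k ≤ m) :
    (2 * k + 1) • (Polynomial.X : Polynomial ℤ) ^ k + (m - 2 * k) • (Polynomial.X : Polynomial ℤ) ^ (k + 1) =
      (1 + Polynomial.C (m : ℤ) * Polynomial.X) * Polynomial.X ^ k +
        2 * Polynomial.X * (1 - Polynomial.X) * Polynomial.derivative (Polynomial.X ^ k) := by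
  rw [Polynomial.derivative_X_pow]
  rw [nsmul_eq_mul, nsmul_eq_mul]
  push_cast [Nat.cast_sub hk]
  rcases k with _ | k'
  · simp
  · have : (Polynomial.X : Polynomial ℤ) ^ (k' + 1 - 1) = Polynomial.X ^ k' := rfl
    rw [this]
    push_cast
    simp only [map_add, map_one, Polynomial.C_eq_natCast]
    push_cast
    ring

lemma Wpoly_succ (m : ℕ) :
    Wpoly (m + 1) = (1 + Polynomial.C (m : ℤ) * Polynomial.X) * Wpoly m +
      2 * Polynomial.X * (1 - Polynomial.X) * Polynomial.derivative (Wpoly m) := by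
  classical
  have hbij := ins_bijective m
  have h1 : Wpoly (m + 1) = ∑ x : Equiv.Perm (Fin m) × Fin (m + 1),
      (Polynomial.X : Polynomial ℤ) ^ lpk (m + 1) (ins x.1 x.2) :=
    (Fintype.sum_bijective _ hbij _ _ (fun x => rfl)).symm
  rw [h1, Fintype.sum_prod_type]
  have h2 : ∀ σ : Equiv.Perm (Fin m),
      ∑ p : Fin (m + 1), (Polynomial.X : Polynomial ℤ) ^ lpk (m + 1) (ins σ p) =
      (1 + Polynomial.C (m : ℤ) * Polynomial.X) * Polynomial.X ^ lpk m σ +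
        2 * Polynomial.X * (1 - Polynomial.X) * Polynomial.derivative (Polynomial.X ^ lpk m σ) := by
    intro σ
    rw [sum_X_lpk_ins σ, nsmul_X_identity m (lpk m σ) (two_lpk_le σ)]
  rw [Finset.sum_congr rfl (fun σ _ => h2 σ)]
  unfold Wpoly
  rw [Polynomial.derivative_sum, Finset.mul_sum, Finset.mul_sum, ← Finset.sum_add_distrib]

noncomputable def ee (j d : ℕ) : Polynomial ℤ := Polynomial.X ^ j * (1 - Polynomial.X) ^ d

noncomputable def UU (a : ℤ) (P : Polynomial ℤ) : Polynomial ℤ :=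
  (1 + Polynomial.C a * Polynomial.X) * P +
    2 * Polynomial.X * (1 - Polynomial.X) * Polynomial.derivative P

lemma UU_sum {ι : Type*} (a : ℤ) (s : Finset ι) (f : ι → Polynomial ℤ) :
    UU a (∑ i ∈ s, f i) = ∑ i ∈ s, UU a (f i) := by
  unfold UU
  rw [Polynomial.derivative_sum, Finset.mul_sum, Finset.mul_sum, ← Finset.sum_add_distrib]

lemma UU_Cmul (a b : ℤ) (P : Polynomial ℤ) : UU a (Polynomial.C b * P) = Polynomial.C b * UU a P := by
  unfold UU
  rw [Polynomial.derivative_C_mul]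
  ring

lemma UU_add (a : ℤ) (P Q : Polynomial ℤ) : UU a (P + Q) = UU a P + UU a Q := by
  unfold UU
  rw [Polynomial.derivative_add]
  ring

lemma UU_ee (a : ℤ) (j d : ℕ) :
    UU a (ee j d) = Polynomial.C (2 * (j : ℤ) + 1) * ee j (d + 1) +
      Polynomial.C (a + 1 - 2 * (d : ℤ)) * ee (j + 1) d := by
  unfold UU ee
  rcases j with _ | j' <;> rcases d with _ | d' <;>
    simp [Polynomial.derivative_mul, Polynomial.derivative_pow, Polynomial.derivative_X_pow,
      Polynomial.C_eq_natCast] <;> push_cast <;> ring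

lemma V_eq_zero : ∀ n k : ℕ, n < k → V n k = 0 := by
  intro n
  induction n with
  | zero =>
    intro k h
    rcases k with _ | k'
    · omega
    · rfl
  | succ n ih =>
    intro k h
    rcases k with _ | k'
    · omega
    · show V n k' + (2 * ((k' : ℤ) + 1) + 1) ^ 2 * V n (k' + 1) = 0
      rw [ih k' (by omega), ih (k' + 1) (by omega)]
      ring

lemma c_succ (n j : ℕ) :
    ((2 * j).factorial : ℤ) * V (n + 1) j =
      (2 * (j : ℤ) + 1) ^ 2 * (((2 * j).factorial : ℤ) * V n j) +
        (2 * (j : ℤ)) * (2 * (j : ℤ) - 1) * (((2 * (j - 1)).factorial : ℤ) * V n (j - 1)) := by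
  rcases j with _ | k
  · show (1 : ℤ) * V (n + 1) 0 = _
    show (1 : ℤ) * V n 0 = _
    push_cast
    ring_nf
  · have hV : V (n + 1) (k + 1) = V n k + (2 * ((k : ℤ) + 1) + 1) ^ 2 * V n (k + 1) := rfl
    have hf : (2 * (k + 1)).factorial = (2 * k + 2) * ((2 * k + 1) * (2 * k).factorial) := by
      have : 2 * (k + 1) = (2 * k + 1) + 1 := by ring
      rw [this, Nat.factorial_succ, Nat.factorial_succ]
    have hs : k + 1 - 1 = k := rfl
    rw [hV, hf, hs]
    push_cast
    ring

noncomputable def RR (n : ℕ) : Polynomial ℤ :=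
  ∑ j ∈ Finset.range (n + 1), Polynomial.C (((2 * j).factorial : ℤ) * V n j) * ee j (n - j)

lemma UU_RR (n : ℕ) :
    UU (2 * n) (RR n) =
      ∑ j ∈ Finset.range (n + 1),
        Polynomial.C (((2 * j).factorial : ℤ) * V n j * (2 * (j : ℤ) + 1)) *
          (ee j ((n - j) + 1) + ee (j + 1) (n - j)) := by
  rw [RR, UU_sum]
  refine Finset.sum_congr rfl fun j hj => ?_
  rw [Finset.mem_range] at hj
  rw [UU_Cmul, UU_ee]
  have hc : (2 * (n : ℤ) + 1 - 2 * ((n - j : ℕ) : ℤ)) = 2 * (j : ℤ) + 1 := by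
    rw [Nat.cast_sub (by omega : j ≤ n)]; ring
  rw [hc]
  simp only [map_mul, map_add, map_one, map_ofNat, Polynomial.C_eq_natCast]
  push_cast
  ring

lemma UU_UU_RR (n : ℕ) :
    UU (2 * n + 1) (UU (2 * n) (RR n)) =
      ∑ j ∈ Finset.range (n + 1),
        (Polynomial.C (((2 * j).factorial : ℤ) * V n j * ((2 * (j : ℤ) + 1) * (2 * (j : ℤ) + 1))) *
            ee j ((n - j) + 1 + 1) +
          Polynomial.C (((2 * j).factorial : ℤ) * V n j * ((2 * (j : ℤ) + 1) * (4 * (j : ℤ) + 3))) *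
            ee (j + 1) ((n - j) + 1) +
          Polynomial.C (((2 * j).factorial : ℤ) * V n j * ((2 * (j : ℤ) + 1) * (2 * (j : ℤ) + 2))) *
            ee (j + 2) (n - j)) := by
  rw [UU_RR, UU_sum]
  refine Finset.sum_congr rfl fun j hj => ?_
  rw [Finset.mem_range] at hj
  rw [UU_Cmul, UU_add, UU_ee, UU_ee]
  have hc1 : (2 * (n : ℤ) + 1 + 1 - 2 * (((n - j) + 1 : ℕ) : ℤ)) = 2 * (j : ℤ) := by
    push_cast [Nat.cast_sub (by omega : j ≤ n)]; ring
  have hc2 : (2 * (n : ℤ) + 1 + 1 - 2 * ((n - j : ℕ) : ℤ)) = 2 * (j : ℤ) + 2 := by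
    push_cast [Nat.cast_sub (by omega : j ≤ n)]; ring
  have hc3 : (2 * ((j + 1 : ℕ) : ℤ) + 1) = 2 * (j : ℤ) + 3 := by push_cast; ring
  rw [hc1, hc2, hc3]
  simp only [map_mul, map_add, map_one, map_ofNat, Polynomial.C_eq_natCast]
  push_cast
  ring

lemma ee_split (j d : ℕ) : ee j d = ee j (d + 1) + ee (j + 1) d := by
  unfold ee; ring

lemma RR_succ_decomp (n : ℕ) :
    RR (n + 1) =
      ((∑ j ∈ Finset.range (n + 1),
          Polynomial.C ((2 * (j : ℤ) + 1) ^ 2 * (((2 * j).factorial : ℤ) * V n j)) *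
            ee j ((n - j) + 1 + 1)) +
        (∑ j ∈ Finset.range (n + 1),
          Polynomial.C ((2 * ((j : ℤ) + 1)) * (2 * ((j : ℤ) + 1) - 1) *
              (((2 * j).factorial : ℤ) * V n j)) * ee (j + 1) ((n - j) + 1))) +
      ((∑ j ∈ Finset.range (n + 1),
          Polynomial.C ((2 * (j : ℤ) + 1) ^ 2 * (((2 * j).factorial : ℤ) * V n j)) *
            ee (j + 1) ((n - j) + 1)) +
        (∑ j ∈ Finset.range (n + 1),
          Polynomial.C ((2 * ((j : ℤ) + 1)) * (2 * ((j : ℤ) + 1) - 1) *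
              (((2 * j).factorial : ℤ) * V n j)) * ee (j + 2) (n - j))) := by
  rw [RR]
  have h1 : ∀ j ∈ Finset.range (n + 2),
      Polynomial.C (((2 * j).factorial : ℤ) * V (n + 1) j) * ee j (n + 1 - j) =
        ((Polynomial.C ((2 * (j : ℤ) + 1) ^ 2 * (((2 * j).factorial : ℤ) * V n j)) *
            ee j ((n + 1 - j) + 1) +
          Polynomial.C ((2 * (j : ℤ)) * (2 * (j : ℤ) - 1) *
              (((2 * (j - 1)).factorial : ℤ) * V n (j - 1))) * ee j ((n + 1 - j) + 1)) +
         (Polynomial.C ((2 * (j : ℤ) + 1) ^ 2 * (((2 * j).factorial : ℤ) * V n j)) *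
            ee (j + 1) (n + 1 - j) +
          Polynomial.C ((2 * (j : ℤ)) * (2 * (j : ℤ) - 1) *
              (((2 * (j - 1)).factorial : ℤ) * V n (j - 1))) * ee (j + 1) (n + 1 - j))) := by
    intro j hj
    rw [c_succ n j, ee_split j (n + 1 - j)]
    simp only [map_mul, map_add, map_one, map_ofNat, map_pow, map_sub, Polynomial.C_eq_natCast]
    push_cast
    ring
  rw [Finset.sum_congr rfl h1, Finset.sum_add_distrib, Finset.sum_add_distrib,
    Finset.sum_add_distrib]
  congr 1
  · congr 1
    · -- A₁ : drop last term
      rw [Finset.sum_range_succ, V_eq_zero n (n + 1) (by omega)]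
      simp only [mul_zero, map_zero, zero_mul, add_zero]
      refine Finset.sum_congr rfl fun j hj => ?_
      rw [Finset.mem_range] at hj
      have he : n + 1 - j = (n - j) + 1 := by omega
      rw [he]
    · -- A₂ : shift
      rw [Finset.sum_range_succ']
      have h0 : Polynomial.C ((2 * ((0 : ℕ) : ℤ)) * (2 * ((0 : ℕ) : ℤ) - 1) *
          (((2 * ((0 : ℕ) - 1)).factorial : ℤ) * V n ((0 : ℕ) - 1))) * ee 0 ((n + 1 - 0) + 1) = 0 := by
        norm_num
      rw [h0, add_zero]
      refine Finset.sum_congr rfl fun j hj => ?_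
      rw [Finset.mem_range] at hj
      have he : n + 1 - (j + 1) = n - j := by omega
      have hs : (j + 1) - 1 = j := rfl
      rw [he, hs]
      congr 1
  · congr 1
    · -- B₁ : drop last term
      rw [Finset.sum_range_succ, V_eq_zero n (n + 1) (by omega)]
      simp only [mul_zero, map_zero, zero_mul, add_zero]
      refine Finset.sum_congr rfl fun j hj => ?_
      rw [Finset.mem_range] at hj
      have he : n + 1 - j = (n - j) + 1 := by omega
      rw [he]
    · -- B₂ : shift
      rw [Finset.sum_range_succ']
      have h0 : Polynomial.C ((2 * ((0 : ℕ) : ℤ)) * (2 * ((0 : ℕ) : ℤ) - 1) *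
          (((2 * ((0 : ℕ) - 1)).factorial : ℤ) * V n ((0 : ℕ) - 1))) * ee (0 + 1) (n + 1 - 0) = 0 := by
        norm_num
      rw [h0, add_zero]
      refine Finset.sum_congr rfl fun j hj => ?_
      rw [Finset.mem_range] at hj
      have he : n + 1 - (j + 1) = n - j := by omega
      have hs : (j + 1) - 1 = j := rfl
      rw [he, hs]
      congr 1

lemma Rstep (n : ℕ) : UU (2 * n + 1) (UU (2 * n) (RR n)) = RR (n + 1) := by
  rw [UU_UU_RR, RR_succ_decomp, ← Finset.sum_add_distrib, ← Finset.sum_add_distrib,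
    ← Finset.sum_add_distrib]
  refine Finset.sum_congr rfl fun j hj => ?_
  simp only [map_mul, map_add, map_one, map_ofNat, map_pow, map_sub, Polynomial.C_eq_natCast]
  push_cast
  ring

lemma Wpoly_even (n : ℕ) : Wpoly (2 * n) = RR n := by
  induction n with
  | zero =>
    have hl : ∀ π : Equiv.Perm (Fin 0), lpk 0 π = 0 := by
      intro π
      simp [lpk]
    rw [show 2 * 0 = 0 from rfl, Wpoly, RR]
    simp only [hl, pow_zero]
    rw [Finset.sum_const, Finset.sum_range_succ, Finset.sum_range_zero]
    have : V 0 0 = 1 := rfl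
    simp [this, ee]
  | succ n ih =>
    have h1 : 2 * (n + 1) = (2 * n + 1) + 1 := by ring
    have h2 : Wpoly (2 * n + 1) = UU (2 * (n : ℤ)) (Wpoly (2 * n)) := by
      rw [Wpoly_succ]; unfold UU; push_cast; ring
    have h3 : Wpoly (2 * n + 1 + 1) = UU (2 * (n : ℤ) + 1) (Wpoly (2 * n + 1)) := by
      rw [Wpoly_succ]; unfold UU; push_cast; ring
    rw [h1, h3, h2, ih, Rstep]

/-- For `n ≥ 1`, `Ŵ_{2n}(x) = Σ_{j=0}^n (2j)! V(n,j) x^j (1-x)^{n-j}` in `ℤ[x]`. -/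
theorem stmt7 (n : ℕ) (hn : 1 ≤ n) :
    Wpoly (2 * n) =
      ∑ j ∈ Finset.range (n + 1),
        Polynomial.C (((2 * j).factorial : ℤ) * V n j) *
          Polynomial.X ^ j * (1 - Polynomial.X) ^ (n - j) := by
  rw [Wpoly_even n, RR]
  refine Finset.sum_congr rfl fun j hj => ?_
  rw [ee, mul_assoc]
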